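/- Bootstrap lemma for the remainder energy: fix C>0, δ>0 and ε∈(0,1/2). For α∈(0,1) set C_{N+1} = C δ (log|log α|)^{1/2}. There exists α₀>0 such that for all 0<α<α₀ the following holds: if T ≤ α log|log α|/(4C_{N+1}) and F:[0,T]→[0,∞) is continuous with F(0) ≤ α^{1−ε}, sup_{t∈[0,T]}F(t) ≤ 4√α, and F(t) ≤ F(0) + C_{N+1}∫₀ᵗ (C_{N+1} e^{C_{N+1}τ/α} + α e^{2C_{N+1}τ/α}) dτ + ∫₀ᵗ (C_{N+1}/α)(1 + e^{C_{N+1}τ/α}) F(τ) dτ + ∫₀ᵗ F(τ)²/α dτ for all t∈[0,T], then in fact sup_{t∈[0,T]}F(t) ≤ 3√α. -/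

import Mathlib

open MeasureTheory Set Real

noncomputable section

/-- `log |log α|` -/
def LL (α : ℝ) : ℝ := Real.log |Real.log α|

/-- the constant `C_{N+1} = C δ (log|log α|)^{1/2}` -/
def CN1 (C δ α : ℝ) : ℝ := C * δ * LL α ^ ((1:ℝ)/2)

/-!
Bootstrap by linearization. On `[0, T]` we have `C_{N+1} τ / α ≤ θ := (log|log α|)/4`, so the
exponential weights are at most `e^{2θ} = |log α|^{1/2}`, and the a priori bound `F ≤ 4√α`
turns `F² / α` into `4 F / √α`. This gives `F t ≤ A + K ∫₀ᵗ F` with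
`A ≤ α^{1-ε} + α·poly(|log α|)` and `K T ≤ α·poly(|log α|)`, and the integral Gronwall
inequality yields `F ≤ A e^{K T}`. Since `α^ε |log α|³ → 0`, for small `α` this is at most
`(3/2) α^{1-ε} e^{1/2} ≤ 3√α`.
-/

open Filter Topology intervalIntegral

theorem le_mul_exp_of_le_add_mul_integral {F : ℝ → ℝ} {T A K : ℝ}
    (hF : ContinuousOn F (Icc 0 T)) (hK : 0 ≤ K)
    (h : ∀ t ∈ Icc 0 T, F t ≤ A + K * ∫ τ in 0..t, F τ) {t : ℝ} (ht : t ∈ Icc 0 T) :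
    F t ≤ A * exp (K * t) := by
  have hT : 0 ≤ T := ht.1.trans ht.2
  set G : ℝ → ℝ := fun t => A + K * ∫ τ in 0..t, F τ with hG
  have hG_cont : ContinuousOn G (Icc 0 T) := by
    have hprimitive := continuousOn_primitive_interval (μ := volume) (a := 0) (b := T)
      (by rw [uIcc_of_le hT]; exact hF.integrableOn_Icc)
    rw [uIcc_of_le hT] at hprimitive
    exact continuousOn_const.add (continuousOn_const.mul hprimitive)
  have hG_deriv : ∀ x ∈ Ioo 0 T, HasDerivAt G (K * F x) x := fun x hx =>
    ((integral_hasDerivAt_right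
      ((hF.mono (Icc_subset_Icc le_rfl hx.2.le)).intervalIntegrable_of_Icc hx.1.le)
      ((hF.mono Ioo_subset_Icc_self).stronglyMeasurableAtFilter isOpen_Ioo x hx)
      (hF.continuousAt (Icc_mem_nhds hx.1 hx.2))).const_mul K).const_add A
  -- `G' = K F ≤ K G`, so `e^{-K t} G t` decreases
  have hanti : AntitoneOn (fun t => exp (-K * t) * G t) (Icc 0 T) := by
    refine antitoneOn_of_hasDerivWithinAt_nonpos (convex_Icc 0 T)
      ((by fun_prop : Continuous fun t => exp (-K * t)).continuousOn.mul hG_cont)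
      (f' := fun x => exp (-K * x) * (K * (F x - G x))) ?_ ?_
    · intro x hx
      rw [interior_Icc] at hx
      refine (((hasDerivAt_id' x).const_mul (-K)).exp.mul
        (hG_deriv x hx)).hasDerivWithinAt.congr_deriv ?_
      ring
    · intro x hx
      rw [interior_Icc] at hx
      have hFG : F x ≤ G x := h x (Ioo_subset_Icc_self hx)
      exact mul_nonpos_of_nonneg_of_nonpos (exp_pos _).le
        (mul_nonpos_of_nonneg_of_nonpos hK (sub_nonpos.2 hFG))
  have h0 : exp (-K * t) * G t ≤ A := by
    simpa [hG] using hanti (left_mem_Icc.2 hT) ht ht.1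
  calc F t ≤ G t := h t ht
    _ = exp (K * t) * (exp (-K * t) * G t) := by
      rw [← mul_assoc, ← exp_add]; simp
    _ ≤ A * exp (K * t) := by
      rw [mul_comm A]; exact mul_le_mul_of_nonneg_left h0 (exp_pos _).le

theorem remainder_le_add_mul_integral {c α θ T : ℝ} {F : ℝ → ℝ}
    (hc : 0 < c) (hα : 0 < α) (hcT : c * T ≤ α * θ)
    (hF : ContinuousOn F (Icc 0 T)) (hF_nonneg : ∀ t ∈ Icc 0 T, 0 ≤ F t)
    (hF_le : ∀ t ∈ Icc 0 T, F t ≤ 4 * √α)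
    (h : ∀ t ∈ Icc 0 T, F t ≤ F 0 + c * ∫ τ in 0..t,
        (c * exp (c * τ / α) + α * exp (2 * c * τ / α)
          + ∫ τ in 0..t, c / α * (1 + exp (c * τ / α)) * F τ) + ∫ τ in 0..t, F τ ^ 2 / α)
    (t : ℝ) (ht : t ∈ Icc 0 T) :
    F t ≤ F 0 + α * θ * (c * exp θ + α * exp (2 * θ))
      + θ * (c * (1 + exp θ) + 4 * √α) * ∫ τ in 0..t, F τ := by
  have hsub : Icc 0 t ⊆ Icc 0 T := Icc_subset_Icc le_rfl ht.2
  have hFt : ContinuousOn F (Icc 0 t) := hF.mono hsub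
  have hct : c * t ≤ α * θ := (mul_le_mul_of_nonneg_left ht.2 hc.le).trans hcT
  have hθ : 0 ≤ θ := nonneg_of_mul_nonneg_right ((mul_nonneg hc.le ht.1).trans hct) hα
  have hτθ : ∀ τ ∈ Icc 0 t, c * τ / α ≤ θ := fun τ hτ => by
    rw [div_le_iff₀ hα, mul_comm θ]
    exact (mul_le_mul_of_nonneg_left hτ.2 hc.le).trans hct
  set I := ∫ τ in 0..t, F τ
  set J := ∫ τ in 0..t, c / α * (1 + exp (c * τ / α)) * F τ
  set J₂ := ∫ τ in 0..t, F τ ^ 2 / α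
  have hJ : J ≤ c / α * (1 + exp θ) * I := by
    refine (integral_mono_on ht.1 ?_ ((hFt.intervalIntegrable_of_Icc ht.1).const_mul _)
      fun τ hτ => ?_).trans_eq (integral_const_mul _ _)
    · exact ((by fun_prop : Continuous fun τ => c / α * (1 + exp (c * τ / α))).continuousOn.mul
        hFt).intervalIntegrable_of_Icc ht.1
    · gcongr
      · exact hF_nonneg τ (hsub hτ)
      · exact hτθ τ hτ
  have hJ₂ : J₂ ≤ 4 / √α * I := by
    refine (integral_mono_on ht.1 (((hFt.pow 2).div_const α).intervalIntegrable_of_Icc ht.1)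
      ((hFt.intervalIntegrable_of_Icc ht.1).const_mul _) fun τ hτ => ?_).trans_eq
      (integral_const_mul _ _)
    calc F τ ^ 2 / α = F τ * F τ / α := by ring
      _ ≤ F τ * (4 * √α) / α := by gcongr; exacts [hF_nonneg τ (hsub hτ), hF_le τ (hsub hτ)]
      _ = 4 / √α * F τ := by
        field_simp
        rw [sq_sqrt hα.le]
  have hJ_nonneg : 0 ≤ J := integral_nonneg ht.1 fun τ hτ =>
    mul_nonneg (by positivity) (hF_nonneg τ (hsub hτ))
  have hJ₂_nonneg : 0 ≤ J₂ := integral_nonneg ht.1 fun τ _ => by positivity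
  have hforcing : ∫ τ in 0..t, (c * exp (c * τ / α) + α * exp (2 * c * τ / α) + J + J₂)
      ≤ (c * exp θ + α * exp (2 * θ) + J + J₂) * t := by
    have hI := norm_integral_le_of_norm_le_const (a := 0) (b := t)
      (f := fun τ => c * exp (c * τ / α) + α * exp (2 * c * τ / α) + J + J₂)
      (C := c * exp θ + α * exp (2 * θ) + J + J₂) fun τ hτ => by
        rw [uIoc_of_le ht.1] at hτ
        have hτθ := hτθ τ (Ioc_subset_Icc_self hτ)
        rw [Real.norm_of_nonneg (by positivity)]
        gcongr
        linarith [show 2 * c * τ / α = 2 * (c * τ / α) by ring]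
    rw [sub_zero, abs_of_nonneg ht.1] at hI
    exact (le_norm_self _).trans hI
  calc F t ≤ F 0 + c * ∫ τ in 0..t, (c * exp (c * τ / α) + α * exp (2 * c * τ / α) + J + J₂) :=
        h t ht
    _ ≤ F 0 + c * ((c * exp θ + α * exp (2 * θ) + J + J₂) * t) := by gcongr
    _ = F 0 + c * t * (c * exp θ + α * exp (2 * θ) + J + J₂) := by ring
    _ ≤ F 0 + α * θ * (c * exp θ + α * exp (2 * θ) + J + J₂) := by gcongr
    _ ≤ F 0 + α * θ * (c * exp θ + α * exp (2 * θ) + c / α * (1 + exp θ) * I + 4 / √α * I) := by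
        gcongr
    _ = _ := by
        field_simp
        linear_combination (-4 * θ * I) * mul_self_sqrt hα.le

section PolylogBounds

variable {κ B α : ℝ} (hκ : 0 < κ) (hB : 1 ≤ B) (hα : 0 < α) (hα1 : α ≤ 1)
include hκ hB hα hα1

theorem forcing_term_le :
    α * (B / 4) * (κ * B ^ (1 / 2 : ℝ) * exp (B / 4) + α * exp (2 * (B / 4)))
      ≤ (κ + 1 + 1 / κ) * α * exp B ^ 3 := by
  have hBE : B ≤ exp B := by linarith [add_one_le_exp B]
  have hsqrtB : B ^ (1 / 2 : ℝ) ≤ B := rpow_le_self_of_one_le hB (by norm_num)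
  have hE : 1 ≤ exp B := one_le_exp (by linarith)
  calc α * (B / 4) * (κ * B ^ (1 / 2 : ℝ) * exp (B / 4) + α * exp (2 * (B / 4)))
      ≤ α * exp B * (κ * exp B * exp B + 1 * exp B) := by gcongr <;> linarith
    _ ≤ α * exp B * (κ * exp B * exp B + 1 * exp B * exp B) := by
        gcongr; exact le_mul_of_one_le_right (by positivity) hE
    _ = (κ + 1) * α * exp B ^ 3 := by ring
    _ ≤ (κ + 1 + 1 / κ) * α * exp B ^ 3 := by
        gcongr ?_ * _ * _; linarith [one_div_pos.2 hκ]

theorem gronwall_exponent_le :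
    B / 4 * (κ * B ^ (1 / 2 : ℝ) * (1 + exp (B / 4)) + 4 * √α)
        * (α * B / (4 * (κ * B ^ (1 / 2 : ℝ))))
      ≤ (κ + 1 + 1 / κ) * α * exp B ^ 3 := by
  have hBE : B ≤ exp B := by linarith [add_one_le_exp B]
  have hs : 1 ≤ B ^ (1 / 2 : ℝ) := one_le_rpow hB (by norm_num)
  have hE : 1 ≤ exp B := one_le_exp (by linarith)
  calc B / 4 * (κ * B ^ (1 / 2 : ℝ) * (1 + exp (B / 4)) + 4 * √α)
        * (α * B / (4 * (κ * B ^ (1 / 2 : ℝ))))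
      = α * B ^ 2 * (1 + exp (B / 4)) / 16 + √α * α * B ^ 2 / (4 * κ * B ^ (1 / 2 : ℝ)) := by
        field_simp
        ring
    _ ≤ α * exp B ^ 2 * (exp B + exp B) / 16 + 1 * α * exp B ^ 2 / (4 * κ * 1) := by
        gcongr
        · linarith
        · rw [sqrt_le_one]; exact hα1
    _ = 1 / 8 * (α * exp B ^ 3) + 1 / (4 * κ) * (α * exp B ^ 2) := by ring
    _ ≤ 1 * (α * exp B ^ 3) + 1 / κ * (α * exp B ^ 3) := by
        gcongr <;> linarith
    _ ≤ (κ + 1 + 1 / κ) * α * exp B ^ 3 := by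
        have : 0 ≤ κ * (α * exp B ^ 3) := by positivity
        linarith

end PolylogBounds

theorem tendsto_LL_nhdsGT_zero : Tendsto LL (𝓝[>] 0) atTop :=
  tendsto_log_atTop.comp (tendsto_abs_atBot_atTop.comp tendsto_log_nhdsGT_zero)

theorem eventually_mul_mul_abs_log_pow_le_rpow {M ε : ℝ} (hM : 0 < M) (hε : 0 < ε) (n : ℕ) :
    ∀ᶠ α in 𝓝[>] 0, M * α * |log α| ^ n ≤ α ^ (1 - ε) / 2 := by
  filter_upwards [(isLittleO_abs_log_rpow_rpow_nhdsGT_zero n (neg_lt_zero.2 hε)).bound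
    (by positivity : 0 < 1 / (2 * M)), self_mem_nhdsWithin] with α hlog (hα : 0 < α)
  rw [norm_of_nonneg (by positivity), norm_of_nonneg (by positivity), rpow_natCast] at hlog
  calc M * α * |log α| ^ n ≤ M * α * (1 / (2 * M) * α ^ (-ε)) := by gcongr
    _ = α ^ (1 - ε) / 2 := by
      rw [rpow_sub hα, rpow_one, rpow_neg hα.le]
      field_simp

theorem rpow_add_mul_exp_le_three_sqrt {α ε a k : ℝ} (hα : 0 < α) (hα1 : α ≤ 1)
    (hε : ε ≤ 1 / 2) (ha : a ≤ α ^ (1 - ε) / 2) (hk : k ≤ α ^ (1 - ε) / 2) :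
    (α ^ (1 - ε) + a) * exp k ≤ 3 * √α := by
  have h_rpow_le_sqrt : α ^ (1 - ε) ≤ √α := by
    rw [sqrt_eq_rpow]; exact rpow_le_rpow_of_exponent_ge hα hα1 (by linarith)
  have h_rpow_le_one : α ^ (1 - ε) ≤ 1 := rpow_le_one hα.le hα1 (by linarith)
  have hexp : exp k ≤ 2 := calc
    exp k ≤ exp (1 / 2) := exp_le_exp.2 (by linarith)
    _ ≤ 1 / (1 - 1 / 2) := exp_bound_div_one_sub_of_interval (by norm_num) (by norm_num)
    _ = 2 := by norm_num
  calc (α ^ (1 - ε) + a) * exp k ≤ (3 / 2 * √α) * 2 :=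
        mul_le_mul (by linarith) hexp (exp_pos _).le (by positivity)
    _ = 3 * √α := by ring

/-- **Bootstrap lemma for the remainder energy** (Lemma 5.2). -/
theorem bootstrap_lemma_remainder_energy
    (C δ ε : ℝ) (hC : 0 < C) (hδ : 0 < δ) (hε : 0 < ε) (hε' : ε < 1/2) :
    ∃ α₀ : ℝ, 0 < α₀ ∧
      ∀ α : ℝ, 0 < α → α < α₀ →
        ∀ T : ℝ, T ≤ α * LL α / (4 * CN1 C δ α) →
          ∀ F : ℝ → ℝ, ContinuousOn F (Icc 0 T) →
            (∀ t ∈ Icc (0:ℝ) T, 0 ≤ F t) →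
            F 0 ≤ α ^ (1 - ε) →
            (∀ t ∈ Icc (0:ℝ) T, F t ≤ 4 * Real.sqrt α) →
            (∀ t ∈ Icc (0:ℝ) T,
              F t ≤ F 0
                + CN1 C δ α *
                    ∫ τ in (0:ℝ)..t,
                      (CN1 C δ α * Real.exp (CN1 C δ α * τ / α)
                        + α * Real.exp (2 * CN1 C δ α * τ / α))
                + (∫ τ in (0:ℝ)..t,
                    (CN1 C δ α / α) * (1 + Real.exp (CN1 C δ α * τ / α)) * F τ)
                + ∫ τ in (0:ℝ)..t, F τ ^ 2 / α) →
            ∀ t ∈ Icc (0:ℝ) T, F t ≤ 3 * Real.sqrt α := by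
  have hκ : 0 < C * δ := mul_pos hC hδ
  obtain ⟨α₀, hα₀, hsmall⟩ := (nhdsGT_basis 0).eventually_iff.1 <|
    (eventually_nhdsWithin_of_eventually_nhds (eventually_lt_nhds one_pos)).and <|
      (tendsto_LL_nhdsGT_zero.eventually_ge_atTop 1).and <|
      eventually_mul_mul_abs_log_pow_le_rpow (by positivity : 0 < C * δ + 1 + 1 / (C * δ)) hε 3
  refine ⟨α₀, hα₀, fun α hα hαα₀ T hT F hF_cont hF_nonneg hF0 hF_le hF t ht => ?_⟩
  obtain ⟨hα1, hB, hpoly⟩ := hsmall ⟨hα, hαα₀⟩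
  have hc : 0 < CN1 C δ α := mul_pos hκ (rpow_pos_of_pos (by linarith) _)
  have hcT : CN1 C δ α * T ≤ α * (LL α / 4) := calc
    CN1 C δ α * T ≤ CN1 C δ α * (α * LL α / (4 * CN1 C δ α)) := by gcongr
    _ = α * (LL α / 4) := by field_simp
  have hexp_LL : exp (LL α) = |log α| :=
    exp_log (abs_pos.2 (log_ne_zero_of_pos_of_ne_one hα hα1.ne))
  have hforcing := forcing_term_le hκ hB hα hα1.le
  have hexponent := gronwall_exponent_le hκ hB hα hα1.le
  have hc_def : C * δ * LL α ^ (1 / 2 : ℝ) = CN1 C δ α := rfl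
  rw [hc_def, hexp_LL] at hforcing hexponent
  have hlin := remainder_le_add_mul_integral hc hα hcT hF_cont hF_nonneg hF_le hF
  have hK : 0 ≤ LL α / 4 * (CN1 C δ α * (1 + exp (LL α / 4)) + 4 * √α) := by
    positivity
  calc F t ≤ _ := le_mul_exp_of_le_add_mul_integral hF_cont hK hlin ht
    _ ≤ _ := by gcongr; exact ht.2.trans hT
    _ ≤ 3 * √α := rpow_add_mul_exp_le_three_sqrt hα hα1.le hε'.le
        (hforcing.trans hpoly) (hexponent.trans hpoly)
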